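/- arXiv:2404.06949 — 3 statements merged into one kernel-verified Lean document; each statement's English description precedes it below -/
import Mathlib

section
/- For the point-target SIMO configuration, the continuum (integral) approximations η(u) = 1/4 + (u/2)·arctan(1/(2u)) + u·arcsinh(1/(2u)) and β(u) = 1/2 + u·arcsinh(1/(2u)) satisfy η(u) − β(u)² = 1/(2880 u⁴) + O(1/u⁶) as u → ∞. -/
/-!
With `t = 1 / (2u)` one has `u / 2 = u² t` and `1 / (2880 u⁴) = u² t⁶ / 45`, so the expression is
`u² (t arctan t - arsinh² t - t⁶ / 45)`. Sandwiching `arctan` and `arsinh` between consecutive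
Taylor polynomials (by comparing derivatives) gives `t arctan t - arsinh² t = t⁶ / 45 + O(t⁸)`
as `t → 0`, and `u² t⁸ = 1 / (256 u⁶)`.
-/

open Filter Set Real Asymptotics Topology

theorem le_of_hasDerivAt_le {f g f' g' : ℝ → ℝ} {a b : ℝ} (hab : a ≤ b)
    (hf : ∀ x, HasDerivAt f (f' x) x) (hg : ∀ x, HasDerivAt g (g' x) x)
    (ha : f a ≤ g a) (hderiv : ∀ x ∈ Ico a b, f' x ≤ g' x) : f b ≤ g b :=
  image_le_of_deriv_right_le_deriv_boundary (fun x _ => (hf x).continuousAt.continuousWithinAt)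
    (fun x _ => (hf x).hasDerivWithinAt) ha (fun x _ => (hg x).continuousAt.continuousWithinAt)
    (fun x _ => (hg x).hasDerivWithinAt) hderiv (right_mem_Icc.mpr hab)

theorem one_div_one_add_sq_le (x : ℝ) : 1 / (1 + x ^ 2) ≤ 1 - x ^ 2 + x ^ 4 := by
  rw [div_le_iff₀ (by positivity)]
  nlinarith [sq_nonneg (x ^ 3)]

theorem le_one_div_one_add_sq (x : ℝ) : 1 - x ^ 2 + x ^ 4 - x ^ 6 ≤ 1 / (1 + x ^ 2) := by
  rw [le_div_iff₀ (by positivity)]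
  nlinarith [sq_nonneg (x ^ 4)]

theorem inv_sqrt_one_add_sq_le (x : ℝ) : (√(1 + x ^ 2))⁻¹ ≤ 1 - x ^ 2 / 2 + 3 * x ^ 4 / 8 := by
  rw [← sqrt_inv, sqrt_le_iff]
  constructor
  · nlinarith [sq_nonneg (x ^ 2 - 2 / 3)]
  · rw [inv_le_iff_one_le_mul₀ (by positivity)]
    have h0 := sq_nonneg x
    nlinarith [pow_nonneg h0 3, mul_nonneg (pow_nonneg h0 3) (sq_nonneg (x ^ 2 - 5 / 6))]

theorem le_inv_sqrt_one_add_sq {x : ℝ} (hx : x ^ 2 ≤ 1) :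
    1 - x ^ 2 / 2 + 3 * x ^ 4 / 8 - 5 * x ^ 6 / 16 ≤ (√(1 + x ^ 2))⁻¹ := by
  have h0 := sq_nonneg x
  rw [← sqrt_inv, le_sqrt (by nlinarith [mul_nonneg (pow_nonneg h0 2) (sub_nonneg.mpr hx)])
    (by positivity), ← one_div, le_div_iff₀ (by positivity)]
  nlinarith [pow_nonneg h0 4, pow_nonneg h0 6, pow_nonneg h0 7,
    mul_nonneg (pow_nonneg h0 4) (sub_nonneg.mpr hx),
    mul_nonneg (pow_nonneg h0 6) (sub_nonneg.mpr hx)]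

theorem arctan_le_of_nonneg {t : ℝ} (ht : 0 ≤ t) : arctan t ≤ t - t ^ 3 / 3 + t ^ 5 / 5 := by
  refine le_of_hasDerivAt_le (g := fun x => x - x ^ 3 / 3 + x ^ 5 / 5) ht hasDerivAt_arctan
    (fun x => ?_) (by simp) (fun x _ => one_div_one_add_sq_le x)
  refine ((hasDerivAt_id' x).sub ((hasDerivAt_pow 3 x).div_const 3)).add
    ((hasDerivAt_pow 5 x).div_const 5) |>.congr_deriv ?_
  push_cast; ring

theorem le_arctan_of_nonneg {t : ℝ} (ht : 0 ≤ t) :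
    t - t ^ 3 / 3 + t ^ 5 / 5 - t ^ 7 / 7 ≤ arctan t := by
  refine le_of_hasDerivAt_le (f := fun x => x - x ^ 3 / 3 + x ^ 5 / 5 - x ^ 7 / 7) ht
    (fun x => ?_) hasDerivAt_arctan (by simp) (fun x _ => le_one_div_one_add_sq x)
  refine (((hasDerivAt_id' x).sub ((hasDerivAt_pow 3 x).div_const 3)).add
    ((hasDerivAt_pow 5 x).div_const 5)).sub ((hasDerivAt_pow 7 x).div_const 7) |>.congr_deriv ?_
  push_cast; ring

theorem arsinh_le_of_nonneg {t : ℝ} (ht : 0 ≤ t) : arsinh t ≤ t - t ^ 3 / 6 + 3 * t ^ 5 / 40 := by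
  refine le_of_hasDerivAt_le (g := fun x => x - x ^ 3 / 6 + 3 * x ^ 5 / 40) ht hasDerivAt_arsinh
    (fun x => ?_) (by simp) (fun x _ => inv_sqrt_one_add_sq_le x)
  refine ((hasDerivAt_id' x).sub ((hasDerivAt_pow 3 x).div_const 6)).add
    (((hasDerivAt_pow 5 x).const_mul 3).div_const 40) |>.congr_deriv ?_
  push_cast; ring

theorem le_arsinh_of_mem_Icc {t : ℝ} (ht : t ∈ Icc 0 1) :
    t - t ^ 3 / 6 + 3 * t ^ 5 / 40 - 5 * t ^ 7 / 112 ≤ arsinh t := by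
  refine le_of_hasDerivAt_le (f := fun x => x - x ^ 3 / 6 + 3 * x ^ 5 / 40 - 5 * x ^ 7 / 112)
    ht.1 (fun x => ?_) hasDerivAt_arsinh (by simp)
    (fun x hx => le_inv_sqrt_one_add_sq (by nlinarith [hx.1, hx.2, ht.2]))
  refine (((hasDerivAt_id' x).sub ((hasDerivAt_pow 3 x).div_const 6)).add
    (((hasDerivAt_pow 5 x).const_mul 3).div_const 40)).sub
    (((hasDerivAt_pow 7 x).const_mul 5).div_const 112) |>.congr_deriv ?_
  push_cast; ring

theorem abs_mul_arctan_sub_arsinh_sq_sub_le {t : ℝ} (ht : t ∈ Icc 0 (1 / 2)) :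
    |t * arctan t - arsinh t ^ 2 - t ^ 6 / 45| ≤ t ^ 8 := by
  obtain ⟨h0, h1⟩ := ht
  have hA := mul_le_mul_of_nonneg_left (arctan_le_of_nonneg h0) h0
  have hA' := mul_le_mul_of_nonneg_left (le_arctan_of_nonneg h0) h0
  have hS := arsinh_le_of_nonneg h0
  have hS' := le_arsinh_of_mem_Icc ⟨h0, by linarith⟩
  have h2 : 0 ≤ 1 - t ^ 2 := by nlinarith
  have hlo : 0 ≤ t - t ^ 3 / 6 + 3 * t ^ 5 / 40 - 5 * t ^ 7 / 112 := by
    nlinarith [pow_nonneg h0 5, mul_nonneg h0 h2, mul_nonneg (pow_nonneg h0 5) h2]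
  have hS2 := pow_le_pow_left₀ (hlo.trans hS') hS 2
  have hS2' := pow_le_pow_left₀ hlo hS' 2
  rw [abs_le]
  constructor
  · nlinarith [pow_nonneg h0 8, pow_nonneg h0 10, mul_nonneg (pow_nonneg h0 8) h2]
  · nlinarith [pow_nonneg h0 8, pow_nonneg h0 10, pow_nonneg h0 14,
      mul_nonneg (pow_nonneg h0 8) h2, mul_nonneg (pow_nonneg h0 10) h2]

theorem mul_arctan_sub_arsinh_sq_isBigO :
    (fun t => t * arctan t - arsinh t ^ 2 - t ^ 6 / 45) =O[𝓝 0] (fun t => t ^ 8) := by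
  refine IsBigO.of_bound 1 ?_
  filter_upwards [Icc_mem_nhds (by norm_num : (-(1 / 2) : ℝ) < 0) (by norm_num : (0 : ℝ) < 1 / 2)]
    with t ht
  have habs : |t| ∈ Icc 0 (1 / 2) := ⟨abs_nonneg t, abs_le.mpr ht⟩
  have heven : ∀ s : ℝ, (-s) * arctan (-s) - arsinh (-s) ^ 2 - (-s) ^ 6 / 45
      = s * arctan s - arsinh s ^ 2 - s ^ 6 / 45 := by
    intro s; simp only [arctan_neg, arsinh_neg]; ring
  rw [norm_eq_abs, norm_eq_abs, one_mul, abs_of_nonneg (by positivity : (0 : ℝ) ≤ t ^ 8)]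
  rcases abs_choice t with h | h
  · simpa [h] using abs_mul_arctan_sub_arsinh_sq_sub_le habs
  · have := abs_mul_arctan_sub_arsinh_sq_sub_le habs
    rwa [h, heven, Even.neg_pow (by decide)] at this

/-- Point-target SIMO: `η(u) − β(u)² = 1/(2880u⁴) + O(1/u⁶)` as `u → ∞`. -/
theorem pt_simo_crb_asymptotics :
    (fun u : ℝ =>
      (1/4 + (u/2) * Real.arctan (1/(2*u)) + u * Real.arsinh (1/(2*u)))
        - (1/2 + u * Real.arsinh (1/(2*u)))^2
        - 1/(2880*u^4))
      =O[atTop] (fun u : ℝ => 1/u^6) := by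
  have hlim : Tendsto (fun u : ℝ => 1 / (2 * u)) atTop (𝓝 0) :=
    tendsto_const_nhds.div_atTop (tendsto_id.const_mul_atTop two_pos)
  calc _ =ᶠ[atTop] fun u : ℝ => u ^ 2 * (1 / (2 * u) * arctan (1 / (2 * u))
          - arsinh (1 / (2 * u)) ^ 2 - (1 / (2 * u)) ^ 6 / 45) := by
        filter_upwards [eventually_ne_atTop 0] with u hu
        field_simp
        ring
    _ =O[atTop] fun u : ℝ => u ^ 2 * (1 / (2 * u)) ^ 8 :=
        (isBigO_refl _ _).mul (mul_arctan_sub_arsinh_sq_isBigO.comp_tendsto hlim)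
    _ = fun u : ℝ => 1 / 256 * (1 / u ^ 6) := by
        funext u
        rcases eq_or_ne u 0 with rfl | hu
        · simp
        · field_simp; ring
    _ =O[atTop] fun u : ℝ => 1 / u ^ 6 := isBigO_const_mul_self _ _ _
end

section
/- Define f(u) = 4u·arctan(1/(4u)) and g(u) = 4u·arcsinh(1/(4u)) for u > 0. Then f(u) − g(u)² = 1/(11520 u⁴) + O(1/u⁶) as u → ∞. -/
open Filter Real

lemma arctan_taylor {x : ℝ} (h0 : 0 ≤ x) :
    |Real.arctan x - (x - x^3/3 + x^5/5)| ≤ x^6 * x := by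
  have key := Convex.norm_image_sub_le_of_norm_hasDerivWithin_le
    (f := fun t => Real.arctan t - (t - t^3/3 + t^5/5))
    (f' := fun t => -(t^6 / (1 + t^2))) (s := Set.Icc 0 x) (C := x^6)
    (x := (0:ℝ)) (y := x)
    (fun t ht => by
      have h := ((Real.hasDerivAt_arctan t).sub
        (((hasDerivAt_id t).sub (((hasDerivAt_pow 3 t).div_const 3))).add
          ((hasDerivAt_pow 5 t).div_const 5)))
      have he : 1 / (1 + t^2) - (1 - (3:ℕ) * t ^ 2 / 3 + (5:ℕ) * t ^ 4 / 5)
          = -(t^6 / (1 + t^2)) := by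
        have hp : (0:ℝ) < 1 + t^2 := by positivity
        field_simp
        ring
      exact (he ▸ h).hasDerivWithinAt)
    (fun t ht => by
      obtain ⟨ht0, htx⟩ := ht
      have hp : (0:ℝ) < 1 + t^2 := by positivity
      rw [norm_neg, Real.norm_eq_abs, abs_of_nonneg (by positivity)]
      calc t^6 / (1+t^2) ≤ t^6 / 1 := by
            apply div_le_div_of_nonneg_left (by positivity) one_pos (by nlinarith)
        _ = t^6 := by ring
        _ ≤ x^6 := pow_le_pow_left₀ ht0 htx 6)
    (convex_Icc 0 x) ⟨le_refl 0, h0⟩ ⟨h0, le_refl x⟩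
  simpa [Real.arctan_zero, abs_of_nonneg h0] using key

set_option maxHeartbeats 1000000 in
lemma arsinh_taylor {x : ℝ} (h0 : 0 ≤ x) (h1 : x ≤ 1) :
    |Real.arsinh x - (x - x^3/6 + 3*x^5/40)| ≤ x^6 * x := by
  have key := Convex.norm_image_sub_le_of_norm_hasDerivWithin_le
    (f := fun t => Real.arsinh t - (t - t^3/6 + 3*t^5/40))
    (f' := fun t => (Real.sqrt (1 + t^2))⁻¹ - (1 - t^2/2 + 3*t^4/8)) (s := Set.Icc 0 x) (C := x^6)
    (x := (0:ℝ)) (y := x)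
    (fun t ht => by
      have h := ((Real.hasDerivAt_arsinh t).sub
        (((hasDerivAt_id t).sub (((hasDerivAt_pow 3 t).div_const 6))).add
          (((hasDerivAt_pow 5 t).const_mul 3).div_const 40)))
      have he : (1 : ℝ) - (3:ℕ) * t ^ 2 / 6 + 3 * ((5:ℕ) * t ^ 4) / 40
          = 1 - t^2/2 + 3*t^4/8 := by push_cast; ring
      rw [he] at h
      exact h.hasDerivWithinAt)
    (fun t ht => by
      obtain ⟨ht0, htx⟩ := ht
      have htx1 : t ≤ 1 := htx.trans h1
      set s := Real.sqrt (1 + t^2) with hs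
      have hs2 : s^2 = 1 + t^2 := Real.sq_sqrt (by positivity)
      have hs1 : 1 ≤ s := by nlinarith [Real.sqrt_nonneg (1 + t^2)]
      have hspos : 0 < s := lt_of_lt_of_le one_pos hs1
      have hq : (0:ℝ) < 1 - t^2/2 + 3*t^4/8 := by nlinarith
      have hfac : 0 ≤ t^6*(5/8 - 15*t^2/64 + 9*t^4/64) := by
        have : (0:ℝ) ≤ 5/8 - 15*t^2/64 + 9*t^4/64 := by nlinarith [sq_nonneg t, sq_nonneg (t^2)]
        positivity
      have halg : (1 - t^2/2 + 3*t^4/8)^2 * s^2 - 1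
          = t^6*(5/8 - 15*t^2/64 + 9*t^4/64) := by rw [hs2]; ring
      have hqs1 : 1 ≤ (1 - t^2/2 + 3*t^4/8) * s := by
        nlinarith [mul_pos hq hspos, hfac, halg]
      have hup : (1 - t^2/2 + 3*t^4/8) * s - 1 ≤ t^6 * s := by
        have h2 : 2*((1 - t^2/2 + 3*t^4/8)*s - 1)
            ≤ ((1 - t^2/2 + 3*t^4/8)*s - 1) * ((1 - t^2/2 + 3*t^4/8)*s + 1) := by
          nlinarith [hqs1]
        have ht2 : t^2 ≤ 1 := by nlinarith
        have hfac2 : t^6*(5/8 - 15*t^2/64 + 9*t^4/64) ≤ t^6 := by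
          have hfle : 5/8 - 15*t^2/64 + 9*t^4/64 ≤ 1 := by nlinarith [sq_nonneg t]
          nlinarith [mul_le_mul_of_nonneg_left hfle (pow_nonneg ht0 6)]
        have hts : t^6 ≤ t^6 * s := by nlinarith [pow_nonneg ht0 6]
        linarith [h2, halg]
      have hsi : s * s⁻¹ = 1 := mul_inv_cancel₀ (ne_of_gt hspos)
      have hlow : s⁻¹ ≤ 1 - t^2/2 + 3*t^4/8 := by nlinarith [hqs1, hsi, hspos]
      have hupp : (1 - t^2/2 + 3*t^4/8) - s⁻¹ ≤ t^6 := by nlinarith [hup, hsi, hspos]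
      rw [Real.norm_eq_abs, abs_sub_comm, abs_of_nonneg (by linarith)]
      have hx6 : t^6 ≤ x^6 := pow_le_pow_left₀ ht0 htx 6
      linarith)
    (convex_Icc 0 x) ⟨le_refl 0, h0⟩ ⟨h0, le_refl x⟩
  simpa [Real.arsinh_zero, abs_of_nonneg h0] using key

lemma key_bound {x : ℝ} (h0 : 0 < x) (h1 : x ≤ 1/4) :
    |Real.arctan x / x - (Real.arsinh x / x)^2 - x^4/45| ≤ 7 * x^6 := by
  have hx1 : x ≤ 1 := by linarith
  have hA := arctan_taylor h0.le
  have hB := arsinh_taylor h0.le hx1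
  set A := Real.arctan x with hAdef
  set B := Real.arsinh x with hBdef
  rw [abs_le] at hA hB
  obtain ⟨hA1, hA2⟩ := hA
  obtain ⟨hB1, hB2⟩ := hB
  have hBpos : 0 ≤ B := Real.arsinh_nonneg_iff.mpr h0.le
  have hsq : x^2 ≤ 1/16 := by nlinarith
  have hx3 : x^3 ≤ x * (1/16) := by nlinarith [mul_le_mul_of_nonneg_left hsq h0.le]
  have hx4 : x^4 ≤ 1 := by nlinarith [sq_nonneg x]
  have hx7 : x^7 ≤ x * (1/16) := by nlinarith [mul_le_mul_of_nonneg_left hx4 (pow_nonneg h0.le 3)]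
  have hQpos : 0 ≤ x - x^3/6 + 3*x^5/40 - x^6*x := by
    have h5 : (0:ℝ) ≤ x^5 := pow_nonneg h0.le 5
    nlinarith [hx3, hx7]
  have hB2up : B^2 ≤ (x - x^3/6 + 3*x^5/40 + x^6*x)^2 := by nlinarith
  have hB2lo : (x - x^3/6 + 3*x^5/40 - x^6*x)^2 ≤ B^2 := by nlinarith
  have hxA2 : x*A ≤ x*((x - x^3/3 + x^5/5) + x^6*x) :=
    mul_le_mul_of_nonneg_left (by linarith) h0.le
  have hxA1 : x*((x - x^3/3 + x^5/5) - x^6*x) ≤ x*A :=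
    mul_le_mul_of_nonneg_left (by linarith) h0.le
  have hx12 : x^12 ≤ x^8 := pow_le_pow_of_le_one h0.le hx1 (by norm_num)
  have hx14 : x^14 ≤ x^8 := pow_le_pow_of_le_one h0.le hx1 (by norm_num)
  have hx10 : (0:ℝ) ≤ x^10 := pow_nonneg h0.le 10
  have hx14p : (0:ℝ) ≤ x^14 := pow_nonneg h0.le 14
  have hN : |x*A - B^2 - x^6/45| ≤ 7 * x^8 := by
    rw [abs_le]
    constructor
    · linarith [hxA1, hB2up, hx12, hx14, hx10, hx14p]
    · linarith [hxA2, hB2lo, hx12, hx14, hx10, hx14p]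
  have hx2 : (0:ℝ) < x^2 := by positivity
  have hEq : A/x - (B/x)^2 - x^4/45 = (x*A - B^2 - x^6/45)/x^2 := by
    field_simp
  rw [hEq, abs_div, abs_of_pos hx2, div_le_iff₀ hx2]
  calc |x*A - B^2 - x^6/45| ≤ 7 * x^8 := hN
    _ = 7 * x^6 * x^2 := by ring

/-- Extended-target SIMO: `f(u) − g(u)² = 1/(11520u⁴) + O(1/u⁶)` as `u → ∞`,
where `f(u) = 4u·arctan(1/(4u))` and `g(u) = 4u·arcsinh(1/(4u))`. -/
theorem et_simo_crb_asymptotics :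
    (fun u : ℝ =>
      (4*u * Real.arctan (1/(4*u)))
        - (4*u * Real.arsinh (1/(4*u)))^2
        - 1/(11520*u^4))
      =O[atTop] (fun u : ℝ => 1/u^6) := by
  rw [Asymptotics.isBigO_iff]
  refine ⟨7, ?_⟩
  filter_upwards [eventually_ge_atTop (1:ℝ)] with u hu
  have hu0 : (0:ℝ) < u := lt_of_lt_of_le one_pos hu
  set x := 1/(4*u) with hx
  have hx0 : 0 < x := by positivity
  have hx1 : x ≤ 1/4 := by
    rw [hx, div_le_div_iff₀ (by positivity) (by norm_num)]
    linarith
  have h4u : 4*u = 1/x := by rw [hx]; field_simp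
  have key := key_bound hx0 hx1
  have he1 : 4*u * Real.arctan x = Real.arctan x / x := by rw [h4u]; ring
  have he2 : 4*u * Real.arsinh x = Real.arsinh x / x := by rw [h4u]; ring
  have he3 : 1/(11520*u^4) = x^4/45 := by
    rw [hx]; field_simp; ring
  rw [he1, he2, he3]
  have he4 : 7 * x^6 ≤ 7 * ‖1/u^6‖ := by
    rw [Real.norm_eq_abs, abs_of_nonneg (by positivity), hx]
    rw [div_pow]
    have h5 : (1:ℝ)/(4*u)^6 ≤ 1/u^6 := by
      apply div_le_div_of_nonneg_left one_pos.le (by positivity)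
      apply pow_le_pow_left₀ hu0.le (by linarith)
    linarith
  calc ‖Real.arctan x / x - (Real.arsinh x / x)^2 - x^4/45‖ ≤ 7 * x^6 := key
    _ ≤ 7 * ‖1/u^6‖ := he4
end

section
/- Define f(u) = 4u·arctan(1/(2u)) − 4u²·log(1 + 1/(4u²)) and g(u) = 4u·arcsinh(1/(2u)) − 8u²(sqrt(1 + 1/(4u²)) − 1) for u > 0. Then f(u) − g(u)² = 7/(11520 u⁴) + O(1/u⁶) as u → ∞. -/
/-!
Put `x = 1/(2u)`. Then `f(u) = F(x)/x⁴` and `g(u) = G(x)/x²` with `F = fRescaled`,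
`F(x) = 2x³ arctan x − x² log(1 + x²)`, and `G = gRescaled`, `G(x) = 2x arsinh x − 2(√(1 + x²) − 1)`,
so the claim is `|F(x) − G(x)² − 7x⁸/720| = O(x¹⁰)` as `x → 0⁺`.
Truncations of the alternating Taylor series bound `arctan` and `log (1 + ·)` on `[0, ∞)` from both
sides (compare derivatives from `0`), likewise `(1 + ·)^(-1/2)` (square), and integrating the latter
gives such bounds for `√(1 + ·)` and `arsinh`. Hence `F(x) = x⁴ − x⁶/6 + x⁸/15 + O(x¹⁰)` and
`G(x) = P(x) + O(x⁸)` with `P(x) = x² − x⁴/12 + x⁶/40`; since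
`P(x)² = x⁴ − x⁶/6 + 41x⁸/720 + O(x¹⁰)`, the leading remainder is `(48 − 41)x⁸/720`.
-/

open Filter Real

lemma le_of_hasDerivAt_le_of_nonneg {f f' g g' : ℝ → ℝ}
    (hf : ∀ t, 0 ≤ t → HasDerivAt f (f' t) t) (hg : ∀ t, 0 ≤ t → HasDerivAt g (g' t) t)
    (h₀ : f 0 ≤ g 0) (hle : ∀ t, 0 ≤ t → f' t ≤ g' t) {x : ℝ} (hx : 0 ≤ x) : f x ≤ g x :=
  image_le_of_deriv_right_le_deriv_boundary
    (fun t ht => (hf t ht.1).continuousAt.continuousWithinAt)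
    (fun t ht => (hf t ht.1).hasDerivWithinAt) h₀
    (fun t ht => (hg t ht.1).continuousAt.continuousWithinAt)
    (fun t ht => (hg t ht.1).hasDerivWithinAt) (fun t ht => hle t ht.1) ⟨hx, le_rfl⟩

lemma arctan_le {x : ℝ} (hx : 0 ≤ x) : arctan x ≤ x - x^3/3 + x^5/5 := by
  have hp (t : ℝ) : HasDerivAt (fun t => t - t^3/3 + t^5/5) (1 - t^2 + t^4) t :=
    (((hasDerivAt_id t).sub ((hasDerivAt_pow 3 t).div_const 3)).add
      ((hasDerivAt_pow 5 t).div_const 5)).congr_deriv (by norm_num)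
  refine le_of_hasDerivAt_le_of_nonneg (fun t _ => hasDerivAt_arctan t) (fun t _ => hp t)
    (by simp) (fun t _ => ?_) hx
  rw [div_le_iff₀ (by positivity)]
  nlinarith [pow_two_nonneg (t^3)]

lemma le_arctan {x : ℝ} (hx : 0 ≤ x) : x - x^3/3 + x^5/5 - x^7/7 ≤ arctan x := by
  have hp (t : ℝ) :
      HasDerivAt (fun t => t - t^3/3 + t^5/5 - t^7/7) (1 - t^2 + t^4 - t^6) t :=
    ((((hasDerivAt_id t).sub ((hasDerivAt_pow 3 t).div_const 3)).add
      ((hasDerivAt_pow 5 t).div_const 5)).sub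
      ((hasDerivAt_pow 7 t).div_const 7)).congr_deriv (by norm_num)
  refine le_of_hasDerivAt_le_of_nonneg (fun t _ => hp t) (fun t _ => hasDerivAt_arctan t)
    (by simp) (fun t _ => ?_) hx
  rw [le_div_iff₀ (by positivity)]
  nlinarith [pow_two_nonneg (t^4)]

lemma hasDerivAt_log_one_add {t : ℝ} (ht : 0 ≤ t) :
    HasDerivAt (fun t => log (1 + t)) (1 / (1 + t)) t := by
  simpa using ((hasDerivAt_id t).const_add 1).log (by positivity)

lemma log_one_add_le {x : ℝ} (hx : 0 ≤ x) : log (1 + x) ≤ x - x^2/2 + x^3/3 := by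
  have hp (t : ℝ) : HasDerivAt (fun t => t - t^2/2 + t^3/3) (1 - t + t^2) t :=
    (((hasDerivAt_id t).sub ((hasDerivAt_pow 2 t).div_const 2)).add
      ((hasDerivAt_pow 3 t).div_const 3)).congr_deriv (by norm_num)
  refine le_of_hasDerivAt_le_of_nonneg (fun t ht => hasDerivAt_log_one_add ht)
    (fun t _ => hp t) (by simp) (fun t ht => ?_) hx
  rw [div_le_iff₀ (by positivity)]
  nlinarith [pow_nonneg ht 3]

lemma le_log_one_add {x : ℝ} (hx : 0 ≤ x) : x - x^2/2 + x^3/3 - x^4/4 ≤ log (1 + x) := by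
  have hp (t : ℝ) :
      HasDerivAt (fun t => t - t^2/2 + t^3/3 - t^4/4) (1 - t + t^2 - t^3) t :=
    ((((hasDerivAt_id t).sub ((hasDerivAt_pow 2 t).div_const 2)).add
      ((hasDerivAt_pow 3 t).div_const 3)).sub
      ((hasDerivAt_pow 4 t).div_const 4)).congr_deriv (by norm_num)
  refine le_of_hasDerivAt_le_of_nonneg (fun t _ => hp t)
    (fun t ht => hasDerivAt_log_one_add ht) (by simp) (fun t ht => ?_) hx
  rw [le_div_iff₀ (by positivity)]
  nlinarith [pow_nonneg ht 4]

lemma inv_sqrt_one_add_le {s : ℝ} (hs : 0 ≤ s) : (√(1 + s))⁻¹ ≤ 1 - s/2 + 3*s^2/8 := by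
  rw [← sqrt_inv, sqrt_le_iff]
  refine ⟨by nlinarith [sq_nonneg (s - 1)], ?_⟩
  rw [inv_le_iff_one_le_mul₀ (by positivity)]
  nlinarith [pow_nonneg hs 3, mul_nonneg (pow_nonneg hs 3) (sq_nonneg (s - 1))]

lemma le_inv_sqrt_one_add {s : ℝ} (hs : 0 ≤ s) :
    1 - s/2 + 3*s^2/8 - 5*s^3/16 ≤ (√(1 + s))⁻¹ := by
  rw [← sqrt_inv]
  rcases le_or_gt (1 - s/2 + 3*s^2/8 - 5*s^3/16) 0 with hq | hq
  · exact hq.trans (sqrt_nonneg _)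
  rw [le_sqrt hq.le (by positivity), ← one_div, le_div_iff₀ (by positivity)]
  nlinarith [pow_nonneg hs 3, pow_nonneg hs 4, pow_nonneg hs 5, pow_nonneg hs 6, pow_nonneg hs 7]

lemma hasDerivAt_sqrt_one_add {t : ℝ} (ht : 0 ≤ t) :
    HasDerivAt (fun t => √(1 + t)) ((√(1 + t))⁻¹ / 2) t :=
  (((hasDerivAt_id t).const_add 1).sqrt (by positivity)).congr_deriv
    (by rw [one_div, mul_inv_rev, div_eq_mul_inv]; rfl)

lemma sqrt_one_add_le {x : ℝ} (hx : 0 ≤ x) : √(1 + x) ≤ 1 + x/2 - x^2/8 + x^3/16 := by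
  have hp (t : ℝ) :
      HasDerivAt (fun t => 1 + t/2 - t^2/8 + t^3/16) ((1 - t/2 + 3*t^2/8) / 2) t :=
    (((((hasDerivAt_id t).div_const 2).const_add 1).sub ((hasDerivAt_pow 2 t).div_const 8)).add
      ((hasDerivAt_pow 3 t).div_const 16)).congr_deriv (by norm_num; ring)
  refine le_of_hasDerivAt_le_of_nonneg (fun t ht => hasDerivAt_sqrt_one_add ht)
    (fun t _ => hp t) (by simp) (fun t ht => ?_) hx
  linarith [inv_sqrt_one_add_le ht]

lemma le_sqrt_one_add {x : ℝ} (hx : 0 ≤ x) :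
    1 + x/2 - x^2/8 + x^3/16 - 5*x^4/128 ≤ √(1 + x) := by
  have hp (t : ℝ) : HasDerivAt (fun t => 1 + t/2 - t^2/8 + t^3/16 - 5*t^4/128)
      ((1 - t/2 + 3*t^2/8 - 5*t^3/16) / 2) t :=
    ((((((hasDerivAt_id t).div_const 2).const_add 1).sub ((hasDerivAt_pow 2 t).div_const 8)).add
      ((hasDerivAt_pow 3 t).div_const 16)).sub
      (((hasDerivAt_pow 4 t).const_mul 5).div_const 128)).congr_deriv (by norm_num; ring)
  refine le_of_hasDerivAt_le_of_nonneg (fun t _ => hp t)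
    (fun t ht => hasDerivAt_sqrt_one_add ht) (by simp) (fun t ht => ?_) hx
  linarith [le_inv_sqrt_one_add ht]

lemma arsinh_le {x : ℝ} (hx : 0 ≤ x) : arsinh x ≤ x - x^3/6 + 3*x^5/40 := by
  have hp (t : ℝ) :
      HasDerivAt (fun t => t - t^3/6 + 3*t^5/40) (1 - t^2/2 + 3*t^4/8) t :=
    (((hasDerivAt_id t).sub ((hasDerivAt_pow 3 t).div_const 6)).add
      (((hasDerivAt_pow 5 t).const_mul 3).div_const 40)).congr_deriv (by norm_num; ring)
  refine le_of_hasDerivAt_le_of_nonneg (fun t _ => hasDerivAt_arsinh t) (fun t _ => hp t)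
    (by simp) (fun t _ => ?_) hx
  linarith [inv_sqrt_one_add_le (sq_nonneg t)]

lemma le_arsinh {x : ℝ} (hx : 0 ≤ x) : x - x^3/6 + 3*x^5/40 - 5*x^7/112 ≤ arsinh x := by
  have hp (t : ℝ) : HasDerivAt (fun t => t - t^3/6 + 3*t^5/40 - 5*t^7/112)
      (1 - t^2/2 + 3*t^4/8 - 5*t^6/16) t :=
    ((((hasDerivAt_id t).sub ((hasDerivAt_pow 3 t).div_const 6)).add
      (((hasDerivAt_pow 5 t).const_mul 3).div_const 40)).sub
      (((hasDerivAt_pow 7 t).const_mul 5).div_const 112)).congr_deriv (by norm_num; ring)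
  refine le_of_hasDerivAt_le_of_nonneg (fun t _ => hp t) (fun t _ => hasDerivAt_arsinh t)
    (by simp) (fun t _ => ?_) hx
  linarith [le_inv_sqrt_one_add (sq_nonneg t)]

noncomputable def fRescaled (x : ℝ) : ℝ := 2*x^3*arctan x - x^2*log (1 + x^2)

noncomputable def gRescaled (x : ℝ) : ℝ := 2*x*arsinh x - 2*(√(1 + x^2) - 1)

lemma abs_fRescaled_sub_le {x : ℝ} (hx : 0 ≤ x) :
    |fRescaled x - (x^4 - x^6/6 + x^8/15)| ≤ 2*x^10/7 := by
  have h2x3 : 0 ≤ 2*x^3 := by positivity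
  have hx2 : 0 ≤ x^2 := sq_nonneg x
  have := mul_le_mul_of_nonneg_left (arctan_le hx) h2x3
  have := mul_le_mul_of_nonneg_left (le_arctan hx) h2x3
  have := mul_le_mul_of_nonneg_left (log_one_add_le hx2) hx2
  have := mul_le_mul_of_nonneg_left (le_log_one_add hx2) hx2
  rw [fRescaled, abs_le]
  constructor <;> linarith [pow_nonneg hx 10]

lemma abs_gRescaled_sub_le {x : ℝ} (hx : 0 ≤ x) :
    |gRescaled x - (x^2 - x^4/12 + x^6/40)| ≤ 5*x^8/56 := by
  have h2x : 0 ≤ 2*x := by positivity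
  have := mul_le_mul_of_nonneg_left (arsinh_le hx) h2x
  have := mul_le_mul_of_nonneg_left (le_arsinh hx) h2x
  have := sqrt_one_add_le (sq_nonneg x)
  have := le_sqrt_one_add (sq_nonneg x)
  rw [gRescaled, abs_le]
  constructor <;> linarith [pow_nonneg hx 8]

lemma abs_fRescaled_sub_gRescaled_sq_sub_le {x : ℝ} (hx₀ : 0 ≤ x) (hx₁ : x ≤ 1) :
    |fRescaled x - gRescaled x ^ 2 - 7*x^8/720| ≤ x^10 := by
  have hx4 : x^4 ≤ x^2 := pow_le_pow_of_le_one hx₀ hx₁ (by norm_num)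
  have hx6 : x^6 ≤ x^4 := pow_le_pow_of_le_one hx₀ hx₁ (by norm_num)
  have hx8 : x^8 ≤ x^2 := pow_le_pow_of_le_one hx₀ hx₁ (by norm_num)
  have hx12 : x^12 ≤ x^10 := pow_le_pow_of_le_one hx₀ hx₁ (by norm_num)
  have hP : 0 ≤ x^2 - x^4/12 + x^6/40 ∧ x^2 - x^4/12 + x^6/40 ≤ x^2 := by
    constructor <;> linarith [pow_nonneg hx₀ 6]
  set P := x^2 - x^4/12 + x^6/40
  set δ := gRescaled x - P
  have hδ : |δ| ≤ 5*x^8/56 := abs_gRescaled_sub_le hx₀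
  have hcross : |δ * (2*P + δ)| ≤ x^10/4 := by
    rw [abs_mul]
    calc |δ| * |2*P + δ| ≤ 5*x^8/56 * (2*x^2 + 5*x^8/56) := by
          gcongr
          calc |2*P + δ| ≤ |2*P| + |δ| := abs_add_le _ _
            _ ≤ 2*x^2 + 5*x^8/56 := by rw [abs_of_nonneg (by linarith)]; linarith
      _ ≤ x^10/4 := by nlinarith [pow_nonneg hx₀ 8, pow_nonneg hx₀ 10]
  have htail : |x^10/240 - x^12/1600| ≤ x^10/240 := by
    rw [abs_le]; constructor <;> linarith [pow_nonneg hx₀ 12]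
  -- `(x⁴ − x⁶/6 + x⁸/15) − P² = 7x⁸/720 + x¹⁰/240 − x¹²/1600`
  calc |fRescaled x - gRescaled x ^ 2 - 7*x^8/720|
      = |(fRescaled x - (x^4 - x^6/6 + x^8/15)) - δ * (2*P + δ)
          + (x^10/240 - x^12/1600)| := by
        congr 1; simp only [δ, P]; ring
    _ ≤ |fRescaled x - (x^4 - x^6/6 + x^8/15)| + |δ * (2*P + δ)|
          + |x^10/240 - x^12/1600| :=
        (abs_add_le _ _).trans (add_le_add_left (abs_sub _ _) _)
    _ ≤ x^10 := by linarith [abs_fRescaled_sub_le hx₀, pow_nonneg hx₀ 10]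

lemma eq_rescaled_mul {u : ℝ} (hu : u ≠ 0) :
    (4*u * arctan (1/(2*u)) - 4*u^2 * log (1 + 1/(4*u^2)))
        - (4*u * arsinh (1/(2*u)) - 8*u^2 * (√(1 + 1/(4*u^2)) - 1))^2 - 7/(11520*u^4)
      = (fRescaled (1/(2*u)) - gRescaled (1/(2*u)) ^ 2 - 7*(1/(2*u))^8/720) * (2*u)^4 := by
  have hx2 : 1 + 1/(4*u^2) = 1 + (1/(2*u))^2 := by ring
  rw [fRescaled, gRescaled, hx2]
  field_simp
  ring

/-- Extended-target MIMO: `f(u) − g(u)² = 7/(11520u⁴) + O(1/u⁶)` as `u → ∞`. -/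
theorem et_mimo_crb_asymptotics :
    (fun u : ℝ =>
      (4*u * Real.arctan (1/(2*u)) - 4*u^2 * Real.log (1 + 1/(4*u^2)))
        - (4*u * Real.arsinh (1/(2*u)) - 8*u^2 * (Real.sqrt (1 + 1/(4*u^2)) - 1))^2
        - 7/(11520*u^4))
      =O[atTop] (fun u : ℝ => 1/u^6) := by
  refine Asymptotics.isBigO_iff.2 ⟨1/64, ?_⟩
  filter_upwards [eventually_ge_atTop (1/2 : ℝ)] with u hu
  have hu₀ : 0 < u := by linarith
  have hx₀ : 0 ≤ 1/(2*u) := by positivity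
  have hx₁ : 1/(2*u) ≤ 1 := by rw [div_le_one (by positivity)]; linarith
  rw [norm_eq_abs, norm_eq_abs, eq_rescaled_mul hu₀.ne', abs_mul,
    abs_of_pos (by positivity : (0:ℝ) < (2*u)^4), abs_of_pos (by positivity : (0:ℝ) < 1/u^6)]
  calc _ ≤ (1/(2*u))^10 * (2*u)^4 := by
        gcongr; exact abs_fRescaled_sub_gRescaled_sq_sub_le hx₀ hx₁
    _ = 1/64 * (1/u^6) := by field_simp; ring
end
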